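/- Let α be a type, Inst ⊆ α a set, let ib be an irreflexive, transitive, and total binary relation on α (for all a ≠ b, ib a b or ib b a), and let ob be an irreflexive transitive relation with (ob;[Inst]) ⊆ ib and ([Inst];ib) ⊆ ob. Suppose a ≠ b with ¬ob a b and ¬ob b a, and define ob' as the transitive closure of ob ∪ {(a,b)}. Then ob' is irreflexive and transitive, ob is strictly contained in ob', (ob';[Inst]) ⊆ ib, and ([Inst];ib) ⊆ ob'. (Once the issued-before relation is total, the observed-before relation can be freely extended to a total relation while preserving the closure laws.) -/

import Mathlib

/-!
Adding the edge `(a, b)` to a strict order `ob` with `a`, `b` incomparable, a path of the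
transitive closure either stays in `ob` or passes through the new edge once, so it relates
`x` to `y` iff `ob x y` or `x ≤ a` and `b ≤ y` in the reflexive closure of `ob`; a cycle would then
give `b ≤ a`. The closure laws with `Inst` survive because `ib` is total: if `ob' x y` with
`y ∈ Inst` but `ib y x`, then `ob y x`, closing a cycle in `ob'`.
-/

open Relation

section

variable {α : Type*}

def insertEdge (r : α → α → Prop) (a b : α) : α → α → Prop :=
  fun u v => r u v ∨ (u = a ∧ v = b)

section InsertEdge

variable {r : α → α → Prop} {a b x y : α}

theorem Relation.ReflGen.trans_of_transitive (hr : Transitive r) {z : α} :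
    ReflGen r x y → ReflGen r y z → ReflGen r x z
  | .refl, h => h
  | h, .refl => h
  | .single hxy, .single hyz => .single (hr hxy hyz)

theorem transGen_insertEdge_iff (hr : Transitive r) :
    TransGen (insertEdge r a b) x y ↔ r x y ∨ (ReflGen r x a ∧ ReflGen r b y) := by
  constructor
  · intro h
    induction h with
    | single h =>
      rcases h with h | ⟨rfl, rfl⟩
      exacts [.inl h, .inr ⟨.refl, .refl⟩]
    | tail _ hyz ih =>
      rcases ih, hyz with ⟨hxy | ⟨hxa, hby⟩, hyz | ⟨rfl, rfl⟩⟩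
      · exact .inl (hr hxy hyz)
      · exact .inr ⟨.single hxy, .refl⟩
      · exact .inr ⟨hxa, hby.trans_of_transitive hr (.single hyz)⟩
      · exact .inr ⟨hxa, .refl⟩
  · rintro (h | ⟨hxa, hby⟩)
    · exact .single (.inl h)
    · have hxb : TransGen (insertEdge r a b) x b :=
        .tail' (hxa.mono fun _ _ => .inl).to_reflTransGen (.inr ⟨rfl, rfl⟩)
      exact hxb.trans_left (hby.mono fun _ _ => .inl).to_reflTransGen

theorem irreflexive_transGen_insertEdge (hirr : Irreflexive r) (htrans : Transitive r)
    (hab : a ≠ b) (hba : ¬ r b a) : Irreflexive (TransGen (insertEdge r a b)) := by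
  intro x hx
  rcases (transGen_insertEdge_iff htrans).1 hx with hxx | ⟨hxa, hbx⟩
  · exact hirr x hxx
  · rcases hbx.trans_of_transitive htrans hxa with _ | h
    exacts [hab rfl, hba h]

end InsertEdge

theorem rel_of_mem_of_total {R S : α → α → Prop} {I : Set α}
    (hS : ∀ x y, x ≠ y → S x y ∨ S y x) (hSR : ∀ x y, x ∈ I → S x y → R x y)
    (hirr : Irreflexive R) (htrans : Transitive R) {x y : α} (hxy : R x y) (hy : y ∈ I) :
    S x y :=
  (hS x y fun h => hirr x (h ▸ hxy)).resolve_right fun hyx => hirr x (htrans hxy (hSR y x hy hyx))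

end

theorem extend_ob_step_general {α : Type*} (Inst : Set α) (ib ob : α → α → Prop)
    (hib_total : ∀ x y, x ≠ y → ib x y ∨ ib y x)
    (hob_irr : Irreflexive ob) (hob_trans : Transitive ob)
    (h_inst_ib : ∀ x y, x ∈ Inst → ib x y → ob x y)
    (a b : α) (hab : a ≠ b) (hnab : ¬ ob a b) (hnba : ¬ ob b a)
    (ob' : α → α → Prop)
    (hob' : ob' = Relation.TransGen (fun u v => ob u v ∨ (u = a ∧ v = b))) :
    Irreflexive ob' ∧ Transitive ob' ∧
    (∀ x y, ob x y → ob' x y) ∧ (∃ x y, ob' x y ∧ ¬ ob x y) ∧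
    (∀ x y, ob' x y → y ∈ Inst → ib x y) ∧
    (∀ x y, x ∈ Inst → ib x y → ob' x y) := by
  replace hob' : ob' = TransGen (insertEdge ob a b) := hob'
  subst hob'
  have hirr := irreflexive_transGen_insertEdge hob_irr hob_trans hab hnba
  have hob_le : ∀ x y, ob x y → TransGen (insertEdge ob a b) x y := fun _ _ h => .single (.inl h)
  have hinst : ∀ x y, x ∈ Inst → ib x y → TransGen (insertEdge ob a b) x y :=
    fun x y hx h => hob_le x y (h_inst_ib x y hx h)
  exact ⟨hirr, fun _ _ _ => TransGen.trans, hob_le, ⟨a, b, .single (.inr ⟨rfl, rfl⟩), hnab⟩,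
    fun _ _ => rel_of_mem_of_total hib_total hinst hirr fun _ _ _ => TransGen.trans, hinst⟩

/-- Once the issued-before relation `ib` is total, the observed-before relation
`ob` can be freely extended by an unordered pair `(a,b)` into `ob'`, which is
irreflexive, transitive, strictly extends `ob`, and still satisfies the closure
laws with respect to `Inst`. -/
theorem extend_ob_step {α : Type*} (Inst : Set α) (ib ob : α → α → Prop)
    (hib_irr : Irreflexive ib) (hib_trans : Transitive ib)
    (hib_total : ∀ x y, x ≠ y → ib x y ∨ ib y x)
    (hob_irr : Irreflexive ob) (hob_trans : Transitive ob)
    (h_ob_inst : ∀ x y, ob x y → y ∈ Inst → ib x y)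
    (h_inst_ib : ∀ x y, x ∈ Inst → ib x y → ob x y)
    (a b : α) (hab : a ≠ b) (hnab : ¬ ob a b) (hnba : ¬ ob b a)
    (ob' : α → α → Prop)
    (hob' : ob' = Relation.TransGen (fun u v => ob u v ∨ (u = a ∧ v = b))) :
    Irreflexive ob' ∧ Transitive ob' ∧
    (∀ x y, ob x y → ob' x y) ∧ (∃ x y, ob' x y ∧ ¬ ob x y) ∧
    (∀ x y, ob' x y → y ∈ Inst → ib x y) ∧
    (∀ x y, x ∈ Inst → ib x y → ob' x y) :=
  extend_ob_step_general Inst ib ob hib_total hob_irr hob_trans h_inst_ib a b hab hnab hnba ob' hob'
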